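/- Let X, Y be independent flat sources on {0,1}^n with min-entropies k₁, k₂, and suppose there is a (classical, deterministic) strategy where Alice sends b₁ bits depending on x, Bob sends b₂ bits depending on y, and a referee guesses x·y correctly with probability 1/2 + ε over X, Y. If k₁ + k₂ − min(b₁,b₂) < n, then there exist such sources and a strategy achieving ε = 1/2 (exact computation). -/

import Mathlib

open scoped Kronecker ComplexOrder
open Matrix BigOperators

/-- Schatten-1 norm `‖A‖₁ = Tr √(AᴴA)`. -/
noncomputable def trNorm {n m : Type*} [Fintype n] [Fintype m] [DecidableEq m] (A : Matrix n m ℂ) : ℝ :=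
  (((Matrix.posSemidef_conjTranspose_mul_self A).1.eigenvectorUnitary.1 *
      diagonal (fun i => ((√((Matrix.posSemidef_conjTranspose_mul_self A).1.eigenvalues i) : ℝ) : ℂ)) *
      (star (Matrix.posSemidef_conjTranspose_mul_self A).1.eigenvectorUnitary : Matrix m m ℂ)).trace).re

/-- Trace distance `(1/2)‖A − B‖₁`. -/
noncomputable def trDist {n : Type*} [Fintype n] [DecidableEq n] (A B : Matrix n n ℂ) : ℝ :=
  (1/2) * trNorm (A - B)

/-- `ρ` is a density matrix. -/
def IsDensity {n : Type*} [Fintype n] (ρ : Matrix n n ℂ) : Prop :=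
  ρ.PosSemidef ∧ ρ.trace = 1

/-!
Take `X` uniform on the vectors supported on a set `s` of `k₁` coordinates and `Y` uniform on
those supported on a set `t` of `k₂` coordinates, with `s` and `t` overlapping as little as
possible, in `k₁ + k₂ - n ≤ min b₁ b₂` coordinates. Then `x ⬝ᵥ y` only involves the coordinates in
`s ∩ t`, so each party can send its whole restriction to `s ∩ t` and the referee computes the
inner product exactly.
-/

open Finset Function

section SupportedVectors

variable {ι R : Type*} [DecidableEq ι] [Zero R]

def extendByZero (s : Finset ι) : (s → R) ↪ (ι → R) where
  toFun g i := if h : i ∈ s then g ⟨i, h⟩ else 0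
  inj' g g' hgg' := funext fun j => by simpa [j.2] using congrFun hgg' j

theorem extendByZero_apply_of_notMem {s : Finset ι} (g : s → R) {i : ι} (hi : i ∉ s) :
    extendByZero s g i = 0 :=
  dif_neg hi

variable [Fintype R]

/-- The support of a flat source of min-entropy `#s * log₂ (card R)`. -/
def vectorsSupportedOn (s : Finset ι) : Finset (ι → R) :=
  univ.map (extendByZero s)

theorem card_vectorsSupportedOn (s : Finset ι) :
    #(vectorsSupportedOn (R := R) s) = Fintype.card R ^ #s := by
  simp [vectorsSupportedOn]

theorem apply_eq_zero_of_mem_vectorsSupportedOn {s : Finset ι} {x : ι → R}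
    (hx : x ∈ vectorsSupportedOn s) {i : ι} (hi : i ∉ s) : x i = 0 := by
  obtain ⟨g, -, rfl⟩ := mem_map.mp hx
  exact extendByZero_apply_of_notMem g hi

end SupportedVectors

theorem dotProduct_restrict_eq {ι R : Type*} [Fintype ι] [NonUnitalNonAssocSemiring R]
    (S : Finset ι) {x y : ι → R} (h : ∀ i ∉ S, x i * y i = 0) :
    (fun i : S => x i) ⬝ᵥ (fun i : S => y i) = x ⬝ᵥ y :=
  (sum_coe_sort S fun i => x i * y i).trans (sum_subset (subset_univ S) fun i _ hi => h i hi)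

theorem exists_protocol_dotProduct {ι R α β : Type*} [Fintype ι] [Fintype R]
    [NonUnitalNonAssocSemiring R] [Fintype α] [Fintype β] (S : Finset ι)
    (hα : Fintype.card R ^ #S ≤ Fintype.card α) (hβ : Fintype.card R ^ #S ≤ Fintype.card β) :
    ∃ (fA : (ι → R) → α) (fB : (ι → R) → β) (ref : α → β → R),
      ∀ x y, (∀ i ∉ S, x i * y i = 0) → ref (fA x) (fB y) = x ⬝ᵥ y := by
  classical
  obtain ⟨eA⟩ := Embedding.nonempty_of_card_le (α := S → R) (β := α) (by simpa using hα)
  obtain ⟨eB⟩ := Embedding.nonempty_of_card_le (α := S → R) (β := β) (by simpa using hβ)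
  refine ⟨fun x => eA fun i => x i, fun y => eB fun i => y i,
    fun a b => invFun eA a ⬝ᵥ invFun eB b, fun x y h => ?_⟩
  simp only [leftInverse_invFun eA.injective _, leftInverse_invFun eB.injective _]
  exact dotProduct_restrict_eq S h

theorem exists_finset_card_inter_eq {n k₁ k₂ : ℕ} (hk₁ : k₁ ≤ n) (hk₂ : k₂ ≤ n) :
    ∃ s t : Finset (Fin n), #s = k₁ ∧ #t = k₂ ∧ #(s ∩ t) = k₁ + k₂ - n := by
  have hcard (m : ℕ) : #{i : Fin n | (i : ℕ) < m} = min n m := Fin.card_filter_val_lt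
  let s : Finset (Fin n) := {i | (i : ℕ) < k₁}
  let u : Finset (Fin n) := {i | (i : ℕ) < n - k₂}
  have hus : #(u ∩ s) = min n (min (n - k₂) k₁) := by
    simp only [s, u, ← filter_and, ← lt_min_iff, hcard]
  refine ⟨s, uᶜ, by simp only [s, hcard]; omega,
    by rw [card_compl, Fintype.card_fin, hcard]; omega, ?_⟩
  rw [← sdiff_eq_inter_compl, card_sdiff, hus]
  simp only [s, hcard]
  omega

/-- if `k₁ + k₂ − min(b₁,b₂) < n` there are flat sources with min-entropies
`k₁, k₂` and a deterministic SMP strategy (with `b₁`, `b₂` bits of communication) computing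
`x·y` exactly on the supports of the sources. -/
theorem stmt17 (n k₁ k₂ b₁ b₂ : ℕ) (hk₁ : k₁ ≤ n) (hk₂ : k₂ ≤ n)
    (h : k₁ + k₂ < n + min b₁ b₂) :
    ∃ (A B : Finset (Fin n → ZMod 2)) (fA : (Fin n → ZMod 2) → Fin (2^b₁))
      (fB : (Fin n → ZMod 2) → Fin (2^b₂)) (ref : Fin (2^b₁) → Fin (2^b₂) → ZMod 2),
      A.card = 2^k₁ ∧ B.card = 2^k₂ ∧
      ∀ x ∈ A, ∀ y ∈ B, ref (fA x) (fB y) = x ⬝ᵥ y := by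
  obtain ⟨s, t, hs, ht, hst⟩ := exists_finset_card_inter_eq hk₁ hk₂
  have hoverlap (b : ℕ) (hb : min b₁ b₂ ≤ b) :
      Fintype.card (ZMod 2) ^ #(s ∩ t) ≤ Fintype.card (Fin (2 ^ b)) := by
    rw [ZMod.card, Fintype.card_fin]
    exact Nat.pow_le_pow_right two_pos (by omega)
  obtain ⟨fA, fB, ref, href⟩ := exists_protocol_dotProduct (s ∩ t)
    (hoverlap b₁ (min_le_left _ _)) (hoverlap b₂ (min_le_right _ _))
  refine ⟨vectorsSupportedOn s, vectorsSupportedOn t, fA, fB, ref,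
    by simp [card_vectorsSupportedOn, hs], by simp [card_vectorsSupportedOn, ht],
    fun x hx y hy => href x y fun i hi => ?_⟩
  rcases not_and_or.mp (mem_inter.not.mp hi) with his | hit
  · rw [apply_eq_zero_of_mem_vectorsSupportedOn hx his, zero_mul]
  · rw [apply_eq_zero_of_mem_vectorsSupportedOn hy hit, mul_zero]
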